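/- The affine span over ℝ of V equals the affine hyperplane {x : EuclideanSpace ℝ (Fin 5) | (∑ i, x i) = 3}; in particular the rectified 5-cell convexHull ℝ V is a 4-dimensional polytope. -/

import Mathlib

/-! Every vertex lies on the hyperplane `∑ i, x i = k`. Conversely, for `i ≠ j` and a set `T` of
`k - 1` further coordinates (which exists as `0 < k < n`), the vertices `1_{T ∪ {i}}` and
`1_{T ∪ {j}}` differ by `eᵢ - eⱼ`; these differences span the sum-zero hyperplane, of dimension
`n - 1`. -/

noncomputable section

/-- The vertex set of the Euclidean rectified 5-cell: all coordinate
permutations of the point `(1,1,1,0,0)`. -/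
def V : Set (EuclideanSpace ℝ (Fin 5)) :=
  {x | (∀ i, x i = 0 ∨ x i = 1) ∧ (∑ i, x i) = 3}

open Finset Module EuclideanSpace

variable {ι : Type*} [Fintype ι]

def sumCoords : EuclideanSpace ℝ ι →ₗ[ℝ] ℝ := ∑ i, projₗ i

@[simp] lemma sumCoords_apply (x : EuclideanSpace ℝ ι) : sumCoords x = ∑ i, x i := by
  simp [sumCoords]

variable (ι) in
def hypersimplexVertices (k : ℕ) : Set (EuclideanSpace ℝ ι) :=
  {x | (∀ i, x i = 0 ∨ x i = 1) ∧ ∑ i, x i = k}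

section

variable [DecidableEq ι]

lemma sum_single_one_mem_hypersimplexVertices (S : Finset ι) :
    ∑ i ∈ S, single i (1 : ℝ) ∈ hypersimplexVertices ι #S := by
  have h : ∀ l, (∑ i ∈ S, single i (1 : ℝ)) l = if l ∈ S then 1 else 0 :=
    fun l ↦ by simp
  refine ⟨fun l ↦ ?_, ?_⟩
  · rw [h]; split_ifs <;> simp
  · simp [h]

lemma single_sub_single_mem_vectorSpan {k : ℕ} (hk : 0 < k) (hkn : k < Fintype.card ι)
    (i j : ι) :
    single i (1 : ℝ) - single j 1 ∈ vectorSpan ℝ (hypersimplexVertices ι k) := by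
  rcases eq_or_ne i j with rfl | hij
  · simp
  obtain ⟨T, hT, hTcard⟩ : ∃ T ⊆ univ \ {i, j}, #T = k - 1 :=
    exists_subset_card_eq (by rw [card_sdiff_of_subset (subset_univ _), card_pair hij]; simp; omega)
  have hiT : i ∉ T := fun h ↦ by simpa using hT h
  have hjT : j ∉ T := fun h ↦ by simpa using hT h
  have hcard : ∀ l ∉ T, #(insert l T) = k := fun l hl ↦ by rw [card_insert_of_notMem hl]; omega
  have hmem := vsub_mem_vectorSpan ℝ
    (hcard i hiT ▸ sum_single_one_mem_hypersimplexVertices (insert i T))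
    (hcard j hjT ▸ sum_single_one_mem_hypersimplexVertices (insert j T))
  simpa [sum_insert hiT, sum_insert hjT] using hmem

end

lemma vectorSpan_hypersimplexVertices {k : ℕ} (hk : 0 < k) (hkn : k < Fintype.card ι) :
    vectorSpan ℝ (hypersimplexVertices ι k) = LinearMap.ker sumCoords := by
  apply le_antisymm
  · rw [vectorSpan_def, Submodule.span_le]
    rintro _ ⟨x, ⟨-, hx⟩, y, ⟨-, hy⟩, rfl⟩
    simp [sum_sub_distrib, hx, hy]
  · classical
    intro y hy
    have : Nonempty ι := Fintype.card_pos_iff.mp (by omega)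
    let j : ι := Classical.arbitrary ι
    have hy : ∑ i, y i = 0 := by simpa using hy
    have hdecomp : y = ∑ i, y i • (single i (1 : ℝ) - single j 1) := by
      ext l
      simp [Pi.single_apply, mul_sub, sum_sub_distrib, hy]
    rw [hdecomp]
    exact Submodule.sum_mem _ fun i _ ↦
      Submodule.smul_mem _ _ (single_sub_single_mem_vectorSpan hk hkn i j)

lemma finrank_ker_sumCoords [Nonempty ι] :
    finrank ℝ (LinearMap.ker (sumCoords : EuclideanSpace ℝ ι →ₗ[ℝ] ℝ)) = Fintype.card ι - 1 := by
  classical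
  have hsurj : Function.Surjective (sumCoords : EuclideanSpace ℝ ι →ₗ[ℝ] ℝ) := fun r ↦
    ⟨single (Classical.arbitrary ι) r, by simp⟩
  have h := LinearMap.finrank_range_add_finrank_ker (sumCoords : EuclideanSpace ℝ ι →ₗ[ℝ] ℝ)
  rw [LinearMap.range_eq_top.mpr hsurj, finrank_top, finrank_self, finrank_euclideanSpace] at h
  omega

lemma coe_affineSpan_hypersimplexVertices {k : ℕ} (hk : 0 < k) (hkn : k < Fintype.card ι) :
    (affineSpan ℝ (hypersimplexVertices ι k) : Set (EuclideanSpace ℝ ι)) =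
      {x | ∑ i, x i = (k : ℝ)} := by
  classical
  obtain ⟨S, -, hS⟩ := exists_subset_card_eq (s := (univ : Finset ι)) (n := k) (by simp; omega)
  have hp := hS ▸ sum_single_one_mem_hypersimplexVertices S
  rw [← AffineSubspace.mk'_eq (subset_affineSpan ℝ _ hp), direction_affineSpan,
    vectorSpan_hypersimplexVertices hk hkn]
  ext x
  simp [AffineSubspace.mem_mk', sum_sub_distrib, hS, sub_eq_zero]

theorem affineSpan_rectified5cell :
    (affineSpan ℝ V : Set (EuclideanSpace ℝ (Fin 5))) =
      {x : EuclideanSpace ℝ (Fin 5) | (∑ i, x i) = 3} ∧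
    Module.finrank ℝ (affineSpan ℝ V).direction = 4 := by
  have hV : V = hypersimplexVertices (Fin 5) 3 := by simp [V, hypersimplexVertices]
  rw [hV, direction_affineSpan, vectorSpan_hypersimplexVertices (by norm_num) (by simp),
    finrank_ker_sumCoords, coe_affineSpan_hypersimplexVertices (by norm_num) (by simp)]
  simp
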